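/- For all x₁, x₂, y₁, y₂ ∈ H with ‖x₁‖ = ‖x₂‖ = ‖y₁‖ = ‖y₂‖ = 1, x₁ ≠ x₂ and y₁ ≠ y₂, there exist T ∈ G and nonzero scalars μ₁, μ₂ ∈ ℂ such that T(x₁,1) = μ₁·(y₁,1) and T(x₂,1) = μ₂·(y₂,1). (The holomorphic automorphism group acts bi-transitively on the boundary of the unit ball.) -/

import Mathlib

noncomputable section

variable {H : Type*} [NormedAddCommGroup H] [InnerProductSpace ℂ H] [CompleteSpace H]

/-- The Hermitian form `A((x,z),(y,w)) = ⟨x,y⟩ - z·conj w` on `H ⊕ ℂ`, linear in the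
first argument (the paper's convention); `⟨x,y⟩` (linear in `x`) is `inner y x` in Mathlib. -/
def formA (u v : H × ℂ) : ℂ :=
  (inner ℂ v.1 u.1 : ℂ) - u.2 * (starRingEnd ℂ) v.2

/-- The standard inner product of the Hilbert space `H ⊕ ℂ`, linear in the first argument. -/
def ipStd (u v : H × ℂ) : ℂ :=
  (inner ℂ v.1 u.1 : ℂ) + u.2 * (starRingEnd ℂ) v.2

/-- Membership in the group `G` of bounded bijective linear maps preserving `A`. -/
def memG (T : (H × ℂ) →L[ℂ] (H × ℂ)) : Prop :=
  Function.Bijective T ∧ ∀ u v : H × ℂ, formA (T u) (T v) = formA u v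

/-- `T` is elliptic: it has an eigenvector `(x,1)` with `‖x‖ < 1`. -/
def IsEllipticG (T : (H × ℂ) →L[ℂ] (H × ℂ)) : Prop :=
  ∃ x : H, ‖x‖ < 1 ∧ ∃ μ : ℂ, T (x, 1) = μ • ((x, 1) : H × ℂ)

/-- Points `x` of the closed unit ball with `(x,1)` an eigenvector of `T`. -/
def fixedBall (T : (H × ℂ) →L[ℂ] (H × ℂ)) : Set H :=
  {x : H | ‖x‖ ≤ 1 ∧ ∃ μ : ℂ, T (x, 1) = μ • ((x, 1) : H × ℂ)}

/-- `T` is hyperbolic: not elliptic, with exactly two fixed points in the closed ball. -/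
def IsHyperbolicG (T : (H × ℂ) →L[ℂ] (H × ℂ)) : Prop :=
  ¬ IsEllipticG T ∧ ∃ x y : H, x ≠ y ∧ fixedBall T = {x, y}

/-- `T` is parabolic: not elliptic, with exactly one fixed point in the closed ball. -/
def IsParabolicG (T : (H × ℂ) →L[ℂ] (H × ℂ)) : Prop :=
  ¬ IsEllipticG T ∧ ∃ x : H, fixedBall T = {x}

/-- `M†`, the `A`-orthogonal complement of a subspace `M` of `H ⊕ ℂ`. -/
def daggerA (M : Submodule ℂ (H × ℂ)) : Submodule ℂ (H × ℂ) where
  carrier := {v | ∀ m ∈ M, formA v m = 0}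
  add_mem' := by
    intro a b ha hb m hm
    have h1 := ha m hm
    have h2 := hb m hm
    simp only [formA, Prod.fst_add, Prod.snd_add, inner_add_right, add_mul] at *
    linear_combination h1 + h2
  zero_mem' := by
    intro m hm
    simp [formA]
  smul_mem' := by
    intro c a ha m hm
    have h1 := ha m hm
    simp only [formA, Prod.smul_fst, Prod.smul_snd, inner_smul_right, smul_eq_mul] at *
    linear_combination c * h1

/-- The norm induced by `A` on a subspace where `A` is positive. -/
def nA (v : H × ℂ) : ℝ := Real.sqrt (formA v v).re

/-- Sequential completeness of a subspace for the norm induced by `A`. -/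
def CompleteForA (M : Submodule ℂ (H × ℂ)) : Prop :=
  ∀ f : ℕ → H × ℂ, (∀ n, f n ∈ M) →
    (∀ ε : ℝ, 0 < ε → ∃ N : ℕ, ∀ m n : ℕ, N ≤ m → N ≤ n → nA (f m - f n) < ε) →
    ∃ v ∈ M, ∀ ε : ℝ, 0 < ε → ∃ N : ℕ, ∀ n : ℕ, N ≤ n → nA (f n - v) < ε

end

/-!
For isotropic `p, q` with `A(p, q) ≠ 0`, the rank-one perturbation
`v ↦ v + A(v, p - q) / A(p, q) • (p - q)` of the identity preserves `A`, sends `p` to `q` and fixes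
every `v` with `A(v, p) = A(v, q)`. One such map moves `(x₁, 1)` to `(y₁, 1)`; a second one, fixing
`(y₁, 1)`, moves the image of `(x₂, 1)` to the multiple of `(y₂, 1)` that pairs with `(y₁, 1)` in
the same way. The second move exists because `A`-orthogonal isotropic vectors are proportional, so
two distinct isotropic vectors with the same nonzero pairing against `(y₁, 1)` cannot be
`A`-orthogonal.
-/

noncomputable section

variable {H : Type*} [NormedAddCommGroup H] [InnerProductSpace ℂ H]

lemma formA_add_left (u u' v : H × ℂ) : formA (u + u') v = formA u v + formA u' v := by
  simp only [formA, Prod.fst_add, Prod.snd_add, inner_add_right]; ring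

lemma formA_add_right (u v v' : H × ℂ) : formA u (v + v') = formA u v + formA u v' := by
  simp only [formA, Prod.fst_add, Prod.snd_add, inner_add_left, map_add]; ring

lemma formA_sub_left (u u' v : H × ℂ) : formA (u - u') v = formA u v - formA u' v := by
  simp only [formA, Prod.fst_sub, Prod.snd_sub, inner_sub_right]; ring

lemma formA_sub_right (u v v' : H × ℂ) : formA u (v - v') = formA u v - formA u v' := by
  simp only [formA, Prod.fst_sub, Prod.snd_sub, inner_sub_left, map_sub]; ring

lemma formA_smul_left (s : ℂ) (u v : H × ℂ) : formA (s • u) v = s * formA u v := by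
  simp only [formA, Prod.smul_fst, Prod.smul_snd, inner_smul_right, smul_eq_mul]; ring

lemma formA_smul_right (s : ℂ) (u v : H × ℂ) :
    formA u (s • v) = starRingEnd ℂ s * formA u v := by
  simp only [formA, Prod.smul_fst, Prod.smul_snd, inner_smul_left, smul_eq_mul, map_mul]; ring

lemma conj_formA (u v : H × ℂ) : starRingEnd ℂ (formA u v) = formA v u := by
  simp only [formA, map_sub, map_mul, inner_conj_symm, Complex.conj_conj]; ring

lemma formA_self (u : H × ℂ) : formA u u = ((‖u.1‖ ^ 2 - ‖u.2‖ ^ 2 : ℝ) : ℂ) := by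
  rw [formA, inner_self_eq_norm_sq_to_K, Complex.mul_conj, Complex.normSq_eq_norm_sq]
  push_cast
  rfl

lemma eq_zero_of_formA_self_eq_zero_of_snd_eq_zero {u : H × ℂ} (hu : formA u u = 0)
    (h2 : u.2 = 0) : u = 0 := by
  rw [formA_self, h2, norm_zero, Complex.ofReal_eq_zero] at hu
  exact Prod.ext (by simpa using hu) h2

/-- `q.2 • p - p.2 • q` is isotropic with vanishing last coordinate, hence zero. -/
lemma smul_eq_smul_of_formA_eq_zero {p q : H × ℂ} (hp : formA p p = 0) (hq : formA q q = 0)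
    (hpq : formA p q = 0) : q.2 • p = p.2 • q := by
  have hqp : formA q p = 0 := by rw [← conj_formA, hpq, map_zero]
  refine sub_eq_zero.1 (eq_zero_of_formA_self_eq_zero_of_snd_eq_zero ?_ ?_)
  · simp only [formA_sub_left, formA_sub_right, formA_smul_left, formA_smul_right, hp, hq, hpq,
      hqp]
    ring
  · simp only [Prod.snd_sub, Prod.smul_snd, smul_eq_mul]; ring

lemma memG_id : memG (ContinuousLinearMap.id ℂ (H × ℂ)) :=
  ⟨Function.bijective_id, fun _ _ => rfl⟩

lemma memG.comp {S T : (H × ℂ) →L[ℂ] (H × ℂ)} (hS : memG S) (hT : memG T) :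
    memG (S.comp T) :=
  ⟨hS.1.comp hT.1, fun u v => (hS.2 (T u) (T v)).trans (hT.2 u v)⟩

def formAL (w : H × ℂ) : (H × ℂ) →L[ℂ] ℂ :=
  (innerSL ℂ w.1).comp (ContinuousLinearMap.fst ℂ H ℂ)
    - starRingEnd ℂ w.2 • ContinuousLinearMap.snd ℂ H ℂ

lemma formAL_apply (w v : H × ℂ) : formAL w v = formA v w := by
  simp only [formAL, formA, sub_apply, ContinuousLinearMap.comp_apply,
    innerSL_apply_apply, ContinuousLinearMap.coe_fst', smul_apply,
    ContinuousLinearMap.coe_snd', smul_eq_mul]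
  ring

def quasiReflection (w : H × ℂ) (γ : ℂ) : (H × ℂ) →L[ℂ] (H × ℂ) :=
  ContinuousLinearMap.id ℂ (H × ℂ) + γ • (formAL w).smulRight w

lemma quasiReflection_apply (w : H × ℂ) (γ : ℂ) (v : H × ℂ) :
    quasiReflection w γ v = v + (γ * formA v w) • w := by
  simp [quasiReflection, formAL_apply, smul_smul]

lemma quasiReflection_quasiReflection (w : H × ℂ) (γ γ' : ℂ) (v : H × ℂ) :
    quasiReflection w γ (quasiReflection w γ' v) =
      quasiReflection w (γ + γ' + γ * γ' * formA w w) v := by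
  simp only [quasiReflection_apply, formA_add_left, formA_smul_left]
  module

lemma quasiReflection_zero_apply (w v : H × ℂ) : quasiReflection w 0 v = v := by
  rw [quasiReflection_apply, zero_mul, zero_smul, add_zero]

section Unitary

variable {w : H × ℂ} {γ : ℂ} (h : γ + starRingEnd ℂ γ + γ * starRingEnd ℂ γ * formA w w = 0)
include h

lemma formA_quasiReflection (u v : H × ℂ) :
    formA (quasiReflection w γ u) (quasiReflection w γ v) = formA u v := by
  simp only [quasiReflection_apply, formA_add_left, formA_add_right, formA_smul_left,
    formA_smul_right, map_mul, ← conj_formA v w]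
  linear_combination (formA u w * starRingEnd ℂ (formA v w)) * h

lemma memG_quasiReflection : memG (quasiReflection w γ) := by
  refine ⟨Function.bijective_iff_has_inverse.2
    ⟨quasiReflection w (starRingEnd ℂ γ), fun v => ?_, fun v => ?_⟩, formA_quasiReflection h⟩
  · rw [quasiReflection_quasiReflection,
      show starRingEnd ℂ γ + γ + starRingEnd ℂ γ * γ * formA w w = 0 by linear_combination h,
      quasiReflection_zero_apply]
  · rw [quasiReflection_quasiReflection, h, quasiReflection_zero_apply]

end Unitary

lemma exists_memG_apply_eq {p q : H × ℂ} (hp : formA p p = 0) (hq : formA q q = 0)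
    (hpq : formA p q ≠ 0) :
    ∃ T, memG T ∧ T p = q ∧ ∀ v, formA v p = formA v q → T v = v := by
  set c := formA p q
  have hww : formA (p - q) (p - q) = -(c + starRingEnd ℂ c) := by
    rw [formA_sub_left, formA_sub_right, formA_sub_right, hp, hq, conj_formA]
    ring
  have hcc : starRingEnd ℂ c ≠ 0 := (map_ne_zero _).2 hpq
  refine ⟨quasiReflection (p - q) c⁻¹, memG_quasiReflection ?_, ?_, fun v hv => ?_⟩
  · rw [hww, map_inv₀]
    field_simp
    ring
  · rw [quasiReflection_apply, formA_sub_right, hp, zero_sub, mul_neg, inv_mul_cancel₀ hpq]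
    module
  · rw [quasiReflection_apply, formA_sub_right, hv, sub_self, mul_zero, zero_smul, add_zero]

lemma eq_of_formA_eq_zero {p q v : H × ℂ} (hp : formA p p = 0) (hq : formA q q = 0)
    (hpq : formA p q = 0) (hv : formA v p = formA v q) (hv₀ : formA v q ≠ 0) : p = q := by
  have hprop := smul_eq_smul_of_formA_eq_zero hp hq hpq
  have hsnd : p.2 = q.2 := by
    have := congrArg (formA v) hprop
    rwa [formA_smul_right, formA_smul_right, hv, mul_left_inj' hv₀,
      (starRingEnd ℂ).injective.eq_iff, eq_comm] at this
  have hq₂ : q.2 ≠ 0 := fun h₀ =>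
    hv₀ (by simp [eq_zero_of_formA_self_eq_zero_of_snd_eq_zero hq h₀, formA])
  rw [hsnd] at hprop
  exact smul_right_injective _ hq₂ hprop

lemma exists_memG_apply_eq_of_formA_eq {p q v : H × ℂ} (hp : formA p p = 0)
    (hq : formA q q = 0) (hv : formA v p = formA v q) (hv₀ : formA v q ≠ 0) :
    ∃ T, memG T ∧ T p = q ∧ T v = v := by
  by_cases hpq : formA p q = 0
  · obtain rfl := eq_of_formA_eq_zero hp hq hpq hv hv₀
    exact ⟨_, memG_id, rfl, rfl⟩
  · obtain ⟨T, hT, hTp, hTfix⟩ := exists_memG_apply_eq hp hq hpq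
    exact ⟨T, hT, hTp, hTfix v hv⟩

lemma formA_boundary (x y : H) : formA ((x, 1) : H × ℂ) (y, 1) = inner ℂ y x - 1 := by
  simp [formA]

lemma formA_boundary_self {x : H} (hx : ‖x‖ = 1) : formA ((x, 1) : H × ℂ) (x, 1) = 0 := by
  rw [formA_boundary, inner_self_eq_norm_sq_to_K, hx]
  norm_num

lemma formA_boundary_eq_zero_iff {x y : H} (hx : ‖x‖ = 1) (hy : ‖y‖ = 1) :
    formA ((x, 1) : H × ℂ) (y, 1) = 0 ↔ x = y := by
  rw [formA_boundary, sub_eq_zero, inner_eq_one_iff_of_norm_eq_one hy hx, eq_comm]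

lemma exists_memG_boundary {x y : H} (hx : ‖x‖ = 1) (hy : ‖y‖ = 1) :
    ∃ T, memG T ∧ T (x, 1) = ((y, 1) : H × ℂ) := by
  by_cases hxy : x = y
  · exact ⟨_, memG_id, by rw [hxy]; rfl⟩
  · obtain ⟨T, hT, hTx, -⟩ := exists_memG_apply_eq (formA_boundary_self hx)
      (formA_boundary_self hy) (mt (formA_boundary_eq_zero_iff hx hy).1 hxy)
    exact ⟨T, hT, hTx⟩

end

section
variable {H : Type*} [NormedAddCommGroup H] [InnerProductSpace ℂ H] [CompleteSpace H]

/-- `G` acts bi-transitively on the boundary of the unit ball: any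
pair of distinct boundary points can be sent (projectively) to any other pair. -/
theorem bitransitive_on_boundary (x₁ x₂ y₁ y₂ : H)
    (hx₁ : ‖x₁‖ = 1) (hx₂ : ‖x₂‖ = 1) (hy₁ : ‖y₁‖ = 1) (hy₂ : ‖y₂‖ = 1)
    (hx : x₁ ≠ x₂) (hy : y₁ ≠ y₂) :
    ∃ (T : (H × ℂ) →L[ℂ] (H × ℂ)) (μ₁ μ₂ : ℂ), memG T ∧ μ₁ ≠ 0 ∧ μ₂ ≠ 0 ∧
      T (x₁, 1) = μ₁ • ((y₁, 1) : H × ℂ) ∧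
      T (x₂, 1) = μ₂ • ((y₂, 1) : H × ℂ) := by
  have ha : formA ((x₁, 1) : H × ℂ) (x₂, 1) ≠ 0 := mt (formA_boundary_eq_zero_iff hx₁ hx₂).1 hx
  have hb : formA ((y₁, 1) : H × ℂ) (y₂, 1) ≠ 0 := mt (formA_boundary_eq_zero_iff hy₁ hy₂).1 hy
  obtain ⟨T₁, hT₁, hT₁x₁⟩ := exists_memG_boundary hx₁ hy₁
  -- `μ` is chosen so that `μ • (y₂, 1)` pairs with `(y₁, 1)` as `T₁ (x₂, 1)` does.
  set μ := starRingEnd ℂ (formA ((x₁, 1) : H × ℂ) (x₂, 1) / formA ((y₁, 1) : H × ℂ) (y₂, 1))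
  have hpair : formA ((y₁, 1) : H × ℂ) (T₁ (x₂, 1)) = formA ((y₁, 1) : H × ℂ) (μ • (y₂, 1)) := by
    rw [formA_smul_right, Complex.conj_conj, div_mul_cancel₀ _ hb, ← hT₁x₁, hT₁.2]
  obtain ⟨T₂, hT₂, hT₂x₂, hT₂y₁⟩ := exists_memG_apply_eq_of_formA_eq
    (by rw [hT₁.2]; exact formA_boundary_self hx₂)
    (by rw [formA_smul_left, formA_smul_right, formA_boundary_self hy₂, mul_zero, mul_zero])
    hpair (by rwa [← hpair, ← hT₁x₁, hT₁.2])
  refine ⟨T₂.comp T₁, 1, μ, hT₂.comp hT₁, one_ne_zero, (map_ne_zero _).2 (div_ne_zero ha hb),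
    ?_, hT₂x₂⟩
  rw [ContinuousLinearMap.comp_apply, hT₁x₁, hT₂y₁, one_smul]

end
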